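/- arXiv:0901.4968 — 2 statements merged into one kernel-verified Lean document; each statement's English description precedes it below -/
import Mathlib

section
/- Let m ≥ 8 be a natural number, and let F = (F₁, F₂, F₃) be a triple of polynomials in ℂ[η] each of degree at most ⌊(m+2)/2⌋. Let X = (X₁, X₂, X₃) be a triple of polynomials satisfying the linear system X' = A_m X + F (componentwise, with formal polynomial derivatives). Then max(|X₁|, |X₂|, |X₃|) ≤ 192 · max(|F₁|, |F₂|, |F₃|) / (m − 2). -/
/-!
Write `x_k, f_k ∈ ℂ³` for the `k`-th coefficient vectors of `X` and `F`; the system says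
`A_m x_k = (k + 1) x_{k+1} - f_k`. In the weighted sup norm `‖v‖ = ‖(v₀, 5v₁, 5v₂)‖∞` the
off-diagonal part `A_m + m` has norm at most `3`, so `(m - 3)‖x_k‖ ≤ (k + 1)‖x_{k+1}‖ + ‖f_k‖`.
Downward induction from the top degree gives `x_k = 0` for `k > N = ⌊(m + 2)/2⌋`. Since
`N(N - 1) ≤ (5/6)(m - 3)²`, two steps of the recursion contract by `5/6`, and summing over `k`
gives `∑ ‖x_k‖ ≤ 12 ∑ ‖f_k‖ / (m - 3) ≤ 132 max |Fᵢ| / (m - 3) ≤ 192 max |Fᵢ| / (m - 2)`.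
-/

open Polynomial Complex

/-- For a polynomial `p ∈ ℂ[η]`, `psiNorm p` is the sum of the absolute values of its
coefficients. -/
noncomputable def psiNorm (p : Polynomial ℂ) : ℝ :=
  ∑ i ∈ Finset.range (p.natDegree + 1), ‖p.coeff i‖

open Finset
open scoped Matrix

section Sequences

variable {n φ : ℕ → ℝ} {N : ℕ}

lemma sum_range_shift_le (hn : ∀ k, 0 ≤ n k) (hN : n (N + 1) = 0) :
    ∑ k ∈ range (N + 1), n (k + 1) ≤ ∑ k ∈ range (N + 1), n k := by
  rw [sum_range_succ, hN, add_zero, sum_range_succ']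
  linarith [hn 0]

lemma eq_zero_of_mul_le_succ {c : ℝ} (hc : 0 < c) (hn : ∀ k, 0 ≤ n k) (hφ : ∀ k, N < k → φ k = 0)
    (hrec : ∀ k, c * n k ≤ (k + 1) * n (k + 1) + φ k) (hfin : ∃ D, ∀ k, D < k → n k = 0) :
    ∀ k, N < k → n k = 0 := by
  obtain ⟨D, hD⟩ := hfin
  intro k hk
  refine Nat.decreasingInduction' (P := fun j => n j = 0) (n := max k (D + 1)) ?_
    (le_max_left _ _) (hD _ (by omega))
  intro j _ hkj hj
  have := hrec j
  rw [hj, hφ j (by omega), mul_zero, zero_add] at this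
  exact le_antisymm (nonpos_of_mul_nonpos_right this hc) (hn j)

lemma mul_sum_le_of_mul_le_succ {c ρ : ℝ} (hc : 0 < c) (hρ : 0 ≤ ρ) (hn : ∀ k, 0 ≤ n k)
    (hφ : ∀ k, 0 ≤ φ k) (hnN : ∀ k, N < k → n k = 0) (hφN : ∀ k, N < k → φ k = 0)
    (hNc : (N : ℝ) ≤ c) (hNρ : (N : ℝ) * (N - 1) ≤ ρ * c ^ 2)
    (hrec : ∀ k, c * n k ≤ (k + 1) * n (k + 1) + φ k) :
    c * (1 - ρ) * ∑ k ∈ range (N + 1), n k ≤ 2 * ∑ k ∈ range (N + 1), φ k := by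
  have two_step : ∀ k, c ^ 2 * n k ≤ ρ * c ^ 2 * n (k + 2) + c * φ (k + 1) + c * φ k := by
    intro k
    have hn2 : ((k : ℝ) + 1) * (k + 2) * n (k + 2) ≤ ρ * c ^ 2 * n (k + 2) := by
      rcases le_or_gt (k + 2) N with hkN | hkN
      · have : ((k : ℝ) + 1) * (k + 2) ≤ N * (N - 1) := by
          have : (k : ℝ) + 2 ≤ N := by exact_mod_cast hkN
          nlinarith
        exact mul_le_mul_of_nonneg_right (this.trans hNρ) (hn _)
      · simp [hnN _ hkN]
    have hφ1 : ((k : ℝ) + 1) * φ (k + 1) ≤ c * φ (k + 1) := by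
      rcases le_or_gt (k + 1) N with hkN | hkN
      · have : (k : ℝ) + 1 ≤ N := by exact_mod_cast hkN
        exact mul_le_mul_of_nonneg_right (this.trans hNc) (hφ _)
      · simp [hφN _ hkN]
    calc c ^ 2 * n k = c * (c * n k) := by ring
      _ ≤ c * ((k + 1) * n (k + 1) + φ k) := mul_le_mul_of_nonneg_left (hrec k) hc.le
      _ = (k + 1) * (c * n (k + 1)) + c * φ k := by ring
      _ ≤ (k + 1) * ((k + 1 + 1) * n (k + 1 + 1) + φ (k + 1)) + c * φ k := by
          gcongr; exact_mod_cast hrec (k + 1)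
      _ ≤ ρ * c ^ 2 * n (k + 2) + c * φ (k + 1) + c * φ k := by
          linarith
  have hshift_n : ∑ k ∈ range (N + 1), n (k + 2) ≤ ∑ k ∈ range (N + 1), n k :=
    (sum_range_shift_le (n := fun k => n (k + 1)) (fun k => hn _) (hnN _ (by omega))).trans
      (sum_range_shift_le hn (hnN _ (by omega)))
  have hshift_φ := sum_range_shift_le hφ (hφN (N + 1) (by omega))
  have hsum := sum_le_sum fun k (_ : k ∈ range (N + 1)) => two_step k
  rw [← mul_sum, sum_add_distrib, sum_add_distrib, ← mul_sum, ← mul_sum, ← mul_sum] at hsum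
  have hρc : 0 ≤ ρ * c ^ 2 := by positivity
  have : c * (c * (1 - ρ) * ∑ k ∈ range (N + 1), n k) ≤ c * (2 * ∑ k ∈ range (N + 1), φ k) := by
    nlinarith [mul_le_mul_of_nonneg_left hshift_n hρc, mul_le_mul_of_nonneg_left hshift_φ hc.le]
  exact le_of_mul_le_mul_left this hc

end Sequences

lemma psiNorm_eq_sum_range {p : ℂ[X]} {M : ℕ} (hp : p.natDegree < M) :
    psiNorm p = ∑ k ∈ range M, ‖p.coeff k‖ := by
  refine sum_subset (range_subset_range.mpr (by omega)) fun k _ hk => ?_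
  rw [coeff_eq_zero_of_natDegree_lt (by simpa using hk), norm_zero]

def coeffVec {R ι : Type*} [Semiring R] (X : ι → R[X]) (k : ℕ) : ι → R := fun i => (X i).coeff k

lemma succ_smul_coeffVec_succ {R ι : Type*} [CommSemiring R] [Fintype ι] (A : Matrix ι ι R)
    {F X : ι → R[X]} (hX : ∀ i, derivative (X i) = (∑ j, C (A i j) * X j) + F i) (k : ℕ) :
    ((k : R) + 1) • coeffVec X (k + 1) = A *ᵥ coeffVec X k + coeffVec F k := by
  ext i
  have := congrArg (coeff · k) (hX i)
  simp only [coeff_derivative, coeff_add, finsetSum_coeff, coeff_C_mul] at this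
  simp only [Pi.smul_apply, smul_eq_mul, Pi.add_apply, Matrix.mulVec, dotProduct, coeffVec]
  rw [mul_comm, this]

lemma coeffVec_eq_zero_of_lt {R ι : Type*} [Semiring R] [Fintype ι] (X : ι → R[X]) {k : ℕ}
    (hk : univ.sup (fun i => (X i).natDegree) < k) : coeffVec X k = 0 := by
  ext i
  exact coeff_eq_zero_of_natDegree_lt ((le_sup (mem_univ i)).trans_lt hk)

noncomputable def lorenzMatrix (m : ℕ) : Matrix (Fin 3) (Fin 3) ℂ :=
  !![-(m : ℂ) - 1, 10, 0;
     1 / 5, -(m : ℂ), -(2 * I);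
     -(I / 5), 2 * I, -(m : ℂ)]

def lorenzWeight : Fin 3 → ℂ := ![1, 5, 5]

lemma norm_le_norm_lorenzWeight_mul (v : Fin 3 → ℂ) (i : Fin 3) :
    ‖v i‖ ≤ ‖lorenzWeight * v‖ := by
  refine le_trans ?_ (norm_le_pi_norm (lorenzWeight * v) i)
  fin_cases i <;> simp [lorenzWeight] <;> linarith [norm_nonneg (v 1), norm_nonneg (v 2)]

lemma norm_lorenzWeight_mul_le (v : Fin 3 → ℂ) :
    ‖lorenzWeight * v‖ ≤ ‖v 0‖ + 5 * ‖v 1‖ + 5 * ‖v 2‖ := by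
  refine (pi_norm_le_iff_of_nonneg (by positivity)).mpr fun i => ?_
  fin_cases i <;> simp [lorenzWeight] <;>
    linarith [norm_nonneg (v 0), norm_nonneg (v 1), norm_nonneg (v 2)]

lemma norm_lorenzWeight_mul_smul (c : ℝ) (hc : 0 ≤ c) (v : Fin 3 → ℂ) :
    ‖lorenzWeight * ((c : ℂ) • v)‖ = c * ‖lorenzWeight * v‖ := by
  rw [mul_smul_comm, norm_smul, norm_real, Real.norm_of_nonneg hc]

lemma sub_three_mul_norm_le_norm_lorenzMatrix_mulVec (m : ℕ) (v : Fin 3 → ℂ) :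
    ((m : ℝ) - 3) * ‖lorenzWeight * v‖ ≤ ‖lorenzWeight * (lorenzMatrix m *ᵥ v)‖ := by
  set y := lorenzMatrix m *ᵥ v
  have hv := norm_le_pi_norm (lorenzWeight * v)
  have hy := norm_le_pi_norm (lorenzWeight * y)
  have hv0 := hv 0; have hv1 := hv 1; have hv2 := hv 2
  have hy0 := hy 0; have hy1 := hy 1; have hy2 := hy 2
  simp only [Pi.mul_apply, lorenzWeight, Matrix.cons_val, norm_mul, one_mul, RCLike.norm_ofNat]
    at hv0 hv1 hv2 hy0 hy1 hy2
  have hAv : y = ![(-(m : ℂ) - 1) * v 0 + 10 * v 1, 1 / 5 * v 0 - m * v 1 - 2 * I * v 2,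
      -(I / 5) * v 0 + 2 * I * v 1 - m * v 2] := by
    ext i; fin_cases i <;> simp [y, lorenzMatrix, dotProduct, Fin.sum_univ_three] <;> ring
  have bound : ∀ a b c : ℂ, ∀ z : ℂ, z = a + b + c → ‖z‖ ≤ ‖a‖ + ‖b‖ + ‖c‖ := by
    rintro a b c z rfl; exact norm_add₃_le
  -- the weighted components of `m • v = (A_m + m) v - A_m v`
  have h0 := bound (-v 0) (10 * v 1) (-y 0) (m * v 0) (by rw [hAv]; simp; ring)
  have h1 := bound (v 0) (-(10 * I) * v 2) (-(5 * y 1)) (m * (5 * v 1)) (by rw [hAv]; simp; ring)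
  have h2 := bound (-I * v 0) (10 * I * v 1) (-(5 * y 2)) (m * (5 * v 2)) (by rw [hAv]; simp; ring)
  simp only [norm_neg, norm_mul, Complex.norm_natCast, RCLike.norm_ofNat, norm_I, mul_one,
    one_mul] at h0 h1 h2
  rw [sub_mul, sub_le_iff_le_add]
  calc (m : ℝ) * ‖lorenzWeight * v‖ = ‖(m : ℂ) • (lorenzWeight * v)‖ := by
        rw [norm_smul, Complex.norm_natCast]
    _ ≤ ‖lorenzWeight * y‖ + 3 * ‖lorenzWeight * v‖ := by
        refine (pi_norm_le_iff_of_nonneg (by positivity)).mpr fun i => ?_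
        fin_cases i <;> simp [lorenzWeight] <;> linarith

lemma psiNorm_le_sum_of_norm_coeff_le {p : ℂ[X]} {n : ℕ → ℝ} {N : ℕ}
    (hp : ∀ k, ‖p.coeff k‖ ≤ n k) (hn : ∀ k, N < k → n k = 0) :
    psiNorm p ≤ ∑ k ∈ range (N + 1), n k := by
  have hdeg : p.natDegree < N + 1 := Nat.lt_succ_of_le <| natDegree_le_iff_coeff_eq_zero.mpr
    fun k hk => norm_le_zero_iff.mp ((hp k).trans (hn k hk).le)
  rw [psiNorm_eq_sum_range hdeg]
  exact sum_le_sum fun k _ => hp k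

lemma sub_three_mul_norm_coeffVec_le {m : ℕ} {F X : Fin 3 → ℂ[X]}
    (hX : ∀ i, derivative (X i) = (∑ j, C (lorenzMatrix m i j) * X j) + F i) (k : ℕ) :
    ((m : ℝ) - 3) * ‖lorenzWeight * coeffVec X k‖ ≤
      (k + 1) * ‖lorenzWeight * coeffVec X (k + 1)‖ + ‖lorenzWeight * coeffVec F k‖ := by
  have hA : lorenzMatrix m *ᵥ coeffVec X k =
      ((k + 1 : ℝ) : ℂ) • coeffVec X (k + 1) - coeffVec F k := by
    push_cast; exact eq_sub_of_add_eq (succ_smul_coeffVec_succ _ hX k).symm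
  calc ((m : ℝ) - 3) * ‖lorenzWeight * coeffVec X k‖
      ≤ ‖lorenzWeight * (lorenzMatrix m *ᵥ coeffVec X k)‖ :=
        sub_three_mul_norm_le_norm_lorenzMatrix_mulVec m _
    _ ≤ ‖lorenzWeight * ((k + 1 : ℝ) : ℂ) • coeffVec X (k + 1)‖ +
          ‖lorenzWeight * coeffVec F k‖ := by
        rw [hA, mul_sub]; exact norm_sub_le _ _
    _ = _ := by rw [norm_lorenzWeight_mul_smul _ (by positivity)]

lemma sum_norm_lorenzWeight_mul_coeffVec_le {F : Fin 3 → ℂ[X]} {N : ℕ}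
    (hF : ∀ i, (F i).natDegree ≤ N) :
    ∑ k ∈ range (N + 1), ‖lorenzWeight * coeffVec F k‖ ≤
      11 * max (psiNorm (F 0)) (max (psiNorm (F 1)) (psiNorm (F 2))) := by
  have h01 := le_max_left (psiNorm (F 0)) (max (psiNorm (F 1)) (psiNorm (F 2)))
  have h12 := le_max_right (psiNorm (F 0)) (max (psiNorm (F 1)) (psiNorm (F 2)))
  have h1 := le_max_left (psiNorm (F 1)) (psiNorm (F 2))
  have h2 := le_max_right (psiNorm (F 1)) (psiNorm (F 2))
  calc ∑ k ∈ range (N + 1), ‖lorenzWeight * coeffVec F k‖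
      ≤ ∑ k ∈ range (N + 1), (‖(F 0).coeff k‖ + 5 * ‖(F 1).coeff k‖ + 5 * ‖(F 2).coeff k‖) :=
        sum_le_sum fun k _ => norm_lorenzWeight_mul_le _
    _ = psiNorm (F 0) + 5 * psiNorm (F 1) + 5 * psiNorm (F 2) := by
        simp only [sum_add_distrib, ← mul_sum, psiNorm_eq_sum_range (Nat.lt_succ_of_le (hF _))]
    _ ≤ _ := by linarith

/-- Let `m ≥ 8`, let `F = (F₁, F₂, F₃)` be polynomials of degree at most
`⌊(m+2)/2⌋`, and let `X = (X₁, X₂, X₃)` satisfy `X' = A_m X + F`, where `A_m` is the matrix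
with rows `(−m−1, 10, 0)`, `(1/5, −m, −2i)`, `(−i/5, 2i, −m)`.  Then
`max |Xᵢ| ≤ 192 max |Fᵢ| / (m − 2)`. -/
theorem lorenz_Xm_bound (m : ℕ) (hm : 8 ≤ m)
    (F X : Fin 3 → Polynomial ℂ)
    (hF : ∀ i, (F i).natDegree ≤ (m + 2) / 2)
    (hX : ∀ i, derivative (X i) =
      (∑ k, C ((!![-(m : ℂ) - 1, 10, 0;
                   1 / 5, -(m : ℂ), -(2 * I);
                   -(I / 5), 2 * I, -(m : ℂ)]) i k) * X k) + F i) :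
    max (psiNorm (X 0)) (max (psiNorm (X 1)) (psiNorm (X 2))) ≤
      192 * max (psiNorm (F 0)) (max (psiNorm (F 1)) (psiNorm (F 2))) / ((m : ℝ) - 2) := by
  set N := (m + 2) / 2
  set n := fun k => ‖lorenzWeight * coeffVec X k‖
  set φ := fun k => ‖lorenzWeight * coeffVec F k‖
  have hm' : (8 : ℝ) ≤ m := by exact_mod_cast hm
  have hN : (2 * N : ℝ) ≤ m + 2 := by exact_mod_cast (by omega : 2 * N ≤ m + 2)
  have hrec : ∀ k, ((m : ℝ) - 3) * n k ≤ (k + 1) * n (k + 1) + φ k :=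
    sub_three_mul_norm_coeffVec_le hX
  have hφN : ∀ k, N < k → φ k = 0 := fun k hk => by
    simp [φ, coeffVec_eq_zero_of_lt F ((Finset.sup_le fun i _ => hF i).trans_lt hk)]
  have hnN : ∀ k, N < k → n k = 0 :=
    eq_zero_of_mul_le_succ (by linarith) (fun _ => norm_nonneg _) hφN hrec
      ⟨univ.sup fun i => (X i).natDegree, fun k hk => by simp [n, coeffVec_eq_zero_of_lt X hk]⟩
  have hNρ : (N : ℝ) * (N - 1) ≤ 5 / 6 * ((m : ℝ) - 3) ^ 2 := by nlinarith
  have hsum := mul_sum_le_of_mul_le_succ (by linarith) (by norm_num)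
    (fun _ => norm_nonneg _) (fun _ => norm_nonneg _) hnN hφN (by linarith) hNρ hrec
  have hφΦ := sum_norm_lorenzWeight_mul_coeffVec_le hF
  have hXsum : ∀ i, psiNorm (X i) ≤ ∑ k ∈ range (N + 1), n k := fun i =>
    psiNorm_le_sum_of_norm_coeff_le (fun k => norm_le_norm_lorenzWeight_mul (coeffVec X k) i) hnN
  have hfinal : ∑ k ∈ range (N + 1), n k ≤
      192 * max (psiNorm (F 0)) (max (psiNorm (F 1)) (psiNorm (F 2))) / ((m : ℝ) - 2) := by
    have hS : 0 ≤ ∑ k ∈ range (N + 1), n k := sum_nonneg fun _ _ => norm_nonneg _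
    rw [le_div_iff₀ (by linarith)]
    nlinarith
  exact max_le ((hXsum 0).trans hfinal) (max_le ((hXsum 1).trans hfinal) ((hXsum 2).trans hfinal))
end

section
/- Let K₁, K₂ > 0 be real, C ∈ ℂ, t₀ ∈ ℂ, and b ∈ ℂ with |b| = 1. Let (p_m)_{m ≥ 0} be polynomials in ℂ[w] with deg p_m ≤ ⌊(m+2)/2⌋ and |p_m| ≤ K₁ K₂^m for all m ≥ 0. Let r > 0 satisfy r < 1/K₂ and r(|log r| + π + |C|) < 1/K₂. Then for every t ∈ ℂ with 0 < |t − t₀| ≤ r and t not in the branch cut {t₀ − conj(b)·ρ : ρ ∈ ℝ, ρ ≥ 0}, the series ∑_{m=0}^∞ p_m(log(b(t − t₀)) + C) · (t − t₀)^m converges absolutely (the family of its terms is summable in ℂ), where log denotes the principal branch of the complex logarithm. -/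
open Real

lemma psiNorm_nonneg (p : Polynomial ℂ) : 0 ≤ psiNorm p :=
  Finset.sum_nonneg fun _ _ => norm_nonneg _

lemma norm_eval_le_psiNorm_mul_pow (p : Polynomial ℂ) (z : ℂ) :
    ‖p.eval z‖ ≤ psiNorm p * max 1 ‖z‖ ^ p.natDegree := by
  rw [Polynomial.eval_eq_sum_range, psiNorm, Finset.sum_mul]
  refine (norm_sum_le _ _).trans (Finset.sum_le_sum fun i hi => ?_)
  rw [norm_mul, norm_pow]
  gcongr
  calc ‖z‖ ^ i ≤ max 1 ‖z‖ ^ i := by gcongr; exact le_max_right _ _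
    _ ≤ max 1 ‖z‖ ^ p.natDegree :=
      pow_le_pow_right₀ (le_max_left _ _) (Finset.mem_range_succ_iff.mp hi)

lemma Complex.norm_log_le (w : ℂ) : ‖Complex.log w‖ ≤ |Real.log ‖w‖| + π := by
  refine (Complex.norm_le_abs_re_add_abs_im _).trans ?_
  rw [Complex.log_re, Complex.log_im]
  gcongr
  exact Complex.abs_arg_le_pi w

lemma monotoneOn_mul_abs_log_add {A : ℝ} (hA : 1 ≤ A) :
    MonotoneOn (fun x => x * (|log x| + A)) (Set.Ici 0) := by
  have hle_one : MonotoneOn (fun x => x * (|log x| + A)) (Set.Icc 0 1) := by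
    rintro s ⟨hs0, -⟩ u ⟨hu0, hu1⟩ hsu
    have hlog_u : log u ≤ 0 := log_nonpos hu0 hu1
    simp only
    rw [abs_of_nonpos hlog_u]
    rcases hs0.eq_or_lt with rfl | hs
    · rw [zero_mul]
      exact mul_nonneg hu0 (by linarith)
    rw [abs_of_nonpos (log_nonpos hs0 (hsu.trans hu1))]
    have hlog : s * (log u - log s) ≤ u - s := by
      have h := log_le_sub_one_of_pos (div_pos (hs.trans_le hsu) hs)
      rw [log_div (hs.trans_le hsu).ne' hs.ne'] at h
      calc s * (log u - log s) ≤ s * (u / s - 1) := by gcongr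
        _ = u - s := by field_simp
    -- the difference is `(u - s) (A - 1) - (u - s) log u + ((u - s) - s (log u - log s))`
    nlinarith [mul_le_mul_of_nonneg_right hsu (neg_nonneg.mpr hlog_u)]
  have hge_one : MonotoneOn (fun x => x * (|log x| + A)) (Set.Ici 1) := by
    rintro s hs u hu hsu
    have hs0 : (0 : ℝ) < s := zero_lt_one.trans_le hs
    have hlog : 0 ≤ log s := log_nonneg hs
    simp only
    rw [abs_of_nonneg hlog, abs_of_nonneg (log_nonneg hu)]
    gcongr
    linarith
  have h := hle_one.union_right hge_one (isGreatest_Icc zero_le_one) isLeast_Ici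
  rwa [Set.Icc_union_Ici_eq_Ici zero_le_one] at h

theorem summable_eval_mul_pow_of_sq_mul_lt_one (K₁ K₂ : ℝ) (p : ℕ → Polynomial ℂ)
    (hdeg : ∀ m, (p m).natDegree ≤ (m + 2) / 2) (hnorm : ∀ m, psiNorm (p m) ≤ K₁ * K₂ ^ m)
    (z x : ℂ) (hq : (K₂ * ‖x‖) ^ 2 * max 1 ‖z‖ < 1) :
    Summable (fun m => (p m).eval z * x ^ m) := by
  set M := max 1 ‖z‖
  have hM : 1 ≤ M := le_max_left _ _
  set q := K₂ * ‖x‖ * √M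
  have hq1 : ‖q‖ < 1 := by
    rw [Real.norm_eq_abs, ← sq_lt_one_iff_abs_lt_one, mul_pow, sq_sqrt (by positivity)]
    exact hq
  have hdegM : ∀ m, M ^ (p m).natDegree ≤ M * √M ^ m := fun m =>
    calc M ^ (p m).natDegree ≤ M ^ ((m + 2) / 2) := pow_le_pow_right₀ hM (hdeg m)
      _ = √M ^ (2 * ((m + 2) / 2)) := by rw [pow_mul, sq_sqrt (by positivity)]
      _ ≤ √M ^ (m + 2) := pow_le_pow_right₀ (one_le_sqrt.mpr hM) (by omega)
      _ = M * √M ^ m := by rw [pow_add, sq_sqrt (by positivity), mul_comm]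
  refine Summable.of_norm_bounded ((summable_geometric_of_norm_lt_one hq1).mul_left (K₁ * M))
    fun m => ?_
  calc ‖(p m).eval z * x ^ m‖ ≤ psiNorm (p m) * M ^ (p m).natDegree * ‖x‖ ^ m := by
        rw [norm_mul, norm_pow]
        gcongr
        exact norm_eval_le_psiNorm_mul_pow _ _
    _ ≤ K₁ * K₂ ^ m * (M * √M ^ m) * ‖x‖ ^ m := by
        gcongr
        · exact (psiNorm_nonneg _).trans (hnorm m)
        · exact hnorm m
        · exact hdegM m
    _ = K₁ * M * q ^ m := by ring

theorem psi_series_convergence_general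
    (K₁ K₂ : ℝ) (hK₂ : 0 < K₂)
    (C t₀ b : ℂ) (hb : ‖b‖ = 1)
    (p : ℕ → Polynomial ℂ)
    (hdeg : ∀ m, (p m).natDegree ≤ (m + 2) / 2)
    (hnorm : ∀ m, psiNorm (p m) ≤ K₁ * K₂ ^ m)
    (r : ℝ)
    (hr2 : r * (|Real.log r| + Real.pi + ‖C‖) < 1 / K₂)
    (t : ℂ) (htr : ‖t - t₀‖ ≤ r) :
    Summable (fun m : ℕ =>
      (p m).eval (Complex.log (b * (t - t₀)) + C) * (t - t₀) ^ m) := by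
  set s := ‖t - t₀‖
  set L := |log s| + π + ‖C‖
  have hA : 1 ≤ π + ‖C‖ := by linarith [pi_gt_three, norm_nonneg C]
  have hL : 1 ≤ L := by linarith [abs_nonneg (log s)]
  have hz : ‖Complex.log (b * (t - t₀)) + C‖ ≤ L :=
    calc _ ≤ ‖Complex.log (b * (t - t₀))‖ + ‖C‖ := norm_add_le _ _
      _ ≤ |log ‖b * (t - t₀)‖| + π + ‖C‖ := by gcongr; exact Complex.norm_log_le _
      _ = L := by rw [norm_mul, hb, one_mul]
  have hsL : K₂ * (s * L) < 1 := by
    have h := monotoneOn_mul_abs_log_add hA (norm_nonneg _) ((norm_nonneg _).trans htr) htr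
    simp only [← add_assoc] at h
    rw [← lt_div_iff₀' hK₂]
    exact h.trans_lt hr2
  refine summable_eval_mul_pow_of_sq_mul_lt_one K₁ K₂ p hdeg hnorm _ _ ?_
  calc (K₂ * s) ^ 2 * max 1 ‖Complex.log (b * (t - t₀)) + C‖ ≤ (K₂ * s) ^ 2 * L ^ 2 := by
        gcongr
        exact (max_le hL hz).trans (le_self_pow₀ hL two_ne_zero)
    _ = (K₂ * (s * L)) ^ 2 := by ring
    _ < 1 := pow_lt_one₀ (by positivity) hsL two_ne_zero

/-- Let `K₁, K₂ > 0`, `C, t₀, b ∈ ℂ` with `|b| = 1`, and let `(p_m)` be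
polynomials with `deg p_m ≤ ⌊(m+2)/2⌋` and `|p_m| ≤ K₁ K₂^m`.  If `r > 0` satisfies
`r < 1/K₂` and `r (|log r| + π + |C|) < 1/K₂`, then for every `t` with `0 < |t − t₀| ≤ r`
not on the branch cut `{t₀ − conj(b) ρ : ρ ≥ 0}`, the psi series
`∑_m p_m (log(b(t − t₀)) + C) (t − t₀)^m` converges absolutely, i.e. the family of its
terms is summable in `ℂ`. -/
theorem psi_series_convergence
    (K₁ K₂ : ℝ) (hK₁ : 0 < K₁) (hK₂ : 0 < K₂)
    (C t₀ b : ℂ) (hb : ‖b‖ = 1)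
    (p : ℕ → Polynomial ℂ)
    (hdeg : ∀ m, (p m).natDegree ≤ (m + 2) / 2)
    (hnorm : ∀ m, psiNorm (p m) ≤ K₁ * K₂ ^ m)
    (r : ℝ) (hr : 0 < r) (hr1 : r < 1 / K₂)
    (hr2 : r * (|Real.log r| + Real.pi + ‖C‖) < 1 / K₂)
    (t : ℂ) (ht0 : 0 < ‖t - t₀‖) (htr : ‖t - t₀‖ ≤ r)
    (hcut : t ∉ {s : ℂ | ∃ ρ : ℝ, 0 ≤ ρ ∧ s = t₀ - (starRingEnd ℂ) b * ρ}) :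
    Summable (fun m : ℕ =>
      (p m).eval (Complex.log (b * (t - t₀)) + C) * (t - t₀) ^ m) :=
  psi_series_convergence_general K₁ K₂ hK₂ C t₀ b hb p hdeg hnorm r hr2 t htr
end
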